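/- For a smooth hypersurface M ⊂ ℝ^{n+1} with second fundamental form L, the Newton tensor [Tₖ](L) is divergence free: for each j, Σᵢ ∇ᵢ([Tₖ]_{ij}(L)) = 0, as a consequence of the Codazzi equation L_{ij,k} = L_{ik,j}. -/

import Mathlib

/-- The generalized Kronecker delta `δ^{i₁...iₖ}_{j₁...jₖ}`:
the determinant of the matrix of ordinary Kronecker deltas. -/
noncomputable def gkdelta {k n : ℕ} (i j : Fin k → Fin n) : ℝ :=
  Matrix.det (Matrix.of fun a b : Fin k => if i a = j b then (1 : ℝ) else 0)

/-- `σₖ(A) = (1/k!) δ^{i₁...iₖ}_{j₁...jₖ} A_{i₁j₁}⋯A_{iₖjₖ}`, the `k`-th elementary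
symmetric function of a matrix `A`, viewed as a polynomial in the entries of `A`. -/
noncomputable def sigmaDelta (n k : ℕ) (A : Fin n → Fin n → ℝ) : ℝ :=
  (1 / (Nat.factorial k : ℝ)) *
    ∑ i : Fin k → Fin n, ∑ j : Fin k → Fin n,
      gkdelta i j * ∏ a : Fin k, A (i a) (j a)

/-- The Newton transformation tensor of a matrix `A`, defined recursively by
`T₀ = Id` and `T_{j+1} = σ_{j+1}(A)·Id − T_j·A`, as a function of the entries. -/
noncomputable def newtonT (n : ℕ) : ℕ → (Fin n → Fin n → ℝ) → Fin n → Fin n → ℝ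
  | 0 => fun _ i j => if i = j then 1 else 0
  | (k + 1) => fun A i j =>
      sigmaDelta n (k + 1) A * (if i = j then (1 : ℝ) else 0)
        - ∑ m : Fin n, newtonT n k A i m * A m j

open Finset

lemma gkdelta_symm {k n : ℕ} (i j : Fin k → Fin n) : gkdelta i j = gkdelta j i := by
  unfold gkdelta
  rw [← Matrix.det_transpose]
  congr 1
  ext a b
  simp only [Matrix.transpose_apply, Matrix.of_apply]
  exact if_congr eq_comm rfl rfl

lemma gkdelta_comp_left {k n : ℕ} (σ : Equiv.Perm (Fin k)) (x y : Fin k → Fin n) :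
    gkdelta (x ∘ σ) y = (Equiv.Perm.sign σ : ℤ) * gkdelta x y := by
  unfold gkdelta
  have h := Matrix.det_permute σ (Matrix.of fun a b : Fin k => if x a = y b then (1:ℝ) else 0)
  rw [← h]
  congr 1

lemma gkdelta_comp_right {k n : ℕ} (σ : Equiv.Perm (Fin k)) (x y : Fin k → Fin n) :
    gkdelta x (y ∘ σ) = (Equiv.Perm.sign σ : ℤ) * gkdelta x y := by
  rw [gkdelta_symm, gkdelta_comp_left, gkdelta_symm x y]

noncomputable def TD (n k : ℕ) (A : Fin n → Fin n → ℝ) (p q : Fin n) : ℝ :=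
  (1 / (Nat.factorial k : ℝ)) *
    ∑ I : Fin k → Fin n, ∑ J : Fin k → Fin n,
      gkdelta (Fin.cons p I) (Fin.cons q J) * ∏ a : Fin k, A (J a) (I a)

lemma TD_zero (n : ℕ) (A : Fin n → Fin n → ℝ) (p q : Fin n) :
    TD n 0 A p q = if p = q then 1 else 0 := by
  unfold TD gkdelta
  simp [Matrix.det_fin_one]

lemma cons_update_eq_comp_swap {n k : ℕ} (i : Fin n) (I : Fin k → Fin n) (a : Fin k) :
    Fin.cons (I a) (Function.update I a i) = Fin.cons i I ∘ Equiv.swap 0 a.succ := by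
  funext b
  refine Fin.cases ?_ (fun b => ?_) b
  · simp [Equiv.swap_apply_left]
  · by_cases hb : b = a
    · subst hb
      simp [Equiv.swap_apply_right]
    · rw [Function.comp_apply, Equiv.swap_apply_of_ne_of_ne (Fin.succ_ne_zero b)
        (fun h => hb (Fin.succ_injective _ h))]
      simp [Function.update_of_ne hb]

lemma insertNth_eq_cons_comp_cycleRange {n k : ℕ} (c : Fin (k+1)) (m : Fin n)
    (J : Fin k → Fin n) :
    c.insertNth m J = Fin.cons m J ∘ c.cycleRange := by
  funext b
  refine Fin.succAboveCases c ?_ ?_ b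
  · simp [Fin.cycleRange_self]
  · intro b
    simp [Fin.cycleRange_succAbove]

lemma gkdelta_cons_expand {n k : ℕ} (p q : Fin n) (I J : Fin (k+1) → Fin n) :
    gkdelta (Fin.cons p I) (Fin.cons q J)
      = (if p = q then (1:ℝ) else 0) * gkdelta I J
        + ∑ c : Fin (k+1), (-1 : ℝ) ^ ((c : ℕ) + 1) * (if I c = q then (1:ℝ) else 0) *
            gkdelta (Fin.cons p (fun b => I (c.succAbove b))) J := by
  classical
  conv_lhs => rw [gkdelta]
  rw [Matrix.det_succ_column_zero, Fin.sum_univ_succ]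
  congr 1
  · -- a = 0 term
    have hsub : (Matrix.of fun a b : Fin (k+1+1) =>
        if (Fin.cons p I : Fin (k+1+1) → Fin n) a = (Fin.cons q J : Fin (k+1+1) → Fin n) b then (1:ℝ) else 0).submatrix
          (Fin.succAbove (0 : Fin (k+1+1))) Fin.succ
        = Matrix.of fun a b : Fin (k+1) => if I a = J b then (1:ℝ) else 0 := by
      ext a b
      simp [Fin.succAbove_zero]
    rw [hsub]
    simp [gkdelta]
  · refine Finset.sum_congr rfl fun c _ => ?_
    have hsub : (Matrix.of fun a b : Fin (k+1+1) =>
        if (Fin.cons p I : Fin (k+1+1) → Fin n) a = (Fin.cons q J : Fin (k+1+1) → Fin n) b then (1:ℝ) else 0).submatrix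
          (Fin.succAbove c.succ) Fin.succ
        = Matrix.of fun a b : Fin (k+1) =>
            if (Fin.cons p (fun b' => I (c.succAbove b')) : Fin (k+1) → Fin n) a = J b
              then (1:ℝ) else 0 := by
      ext a b
      refine Fin.cases ?_ (fun a => ?_) a
      · simp [Fin.succ_succAbove_zero]
      · simp [Fin.succ_succAbove_succ]
    rw [hsub]
    simp only [Matrix.of_apply, Fin.cons_succ, Fin.cons_zero, Fin.val_succ]
    rw [gkdelta]

lemma sum_insertNth {M : Type*} [AddCommMonoid M] {n k : ℕ} (c : Fin (k+1))
    (f : (Fin (k+1) → Fin n) → M) :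
    ∑ I : Fin (k+1) → Fin n, f I
      = ∑ m : Fin n, ∑ I' : Fin k → Fin n, f (c.insertNth m I') := by
  rw [← Equiv.sum_comp (Fin.insertNthEquiv (fun _ => Fin n) c) f, Fintype.sum_prod_type]
  rfl

lemma cofactor_term (n k : ℕ) (A : Fin n → Fin n → ℝ) (p q : Fin n) (c : Fin (k+1)) :
    (∑ I : Fin (k+1) → Fin n, ∑ J : Fin (k+1) → Fin n,
      ((-1:ℝ) ^ ((c:ℕ)+1) * (if I c = q then (1:ℝ) else 0) *
        gkdelta (Fin.cons p (fun b => I (c.succAbove b))) J) * ∏ a : Fin (k+1), A (J a) (I a))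
    = -∑ m : Fin n, (∑ I' : Fin k → Fin n, ∑ J' : Fin k → Fin n,
        gkdelta (Fin.cons p I') (Fin.cons m J') * ∏ b : Fin k, A (J' b) (I' b)) * A m q := by
  classical
  calc
    (∑ I : Fin (k+1) → Fin n, ∑ J : Fin (k+1) → Fin n,
        ((-1:ℝ) ^ ((c:ℕ)+1) * (if I c = q then (1:ℝ) else 0) *
          gkdelta (Fin.cons p (fun b => I (c.succAbove b))) J) * ∏ a : Fin (k+1), A (J a) (I a))
      = ∑ m : Fin n, ∑ I' : Fin k → Fin n, ∑ J : Fin (k+1) → Fin n,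
          ((-1:ℝ) ^ ((c:ℕ)+1) * (if m = q then (1:ℝ) else 0) *
            gkdelta (Fin.cons p I') J)
            * (A (J c) m * ∏ b : Fin k, A (J (c.succAbove b)) (I' b)) := by
        rw [sum_insertNth c]
        refine Finset.sum_congr rfl fun m _ => Finset.sum_congr rfl fun I' _ =>
          Finset.sum_congr rfl fun J _ => ?_
        rw [Fin.prod_univ_succAbove
          (fun a : Fin (k+1) => A (J a) (Fin.insertNth (α := fun _ => Fin n) c m I' a)) c]
        simp [Fin.insertNth_apply_same, Fin.insertNth_apply_succAbove]
    _ = ∑ I' : Fin k → Fin n, ∑ J : Fin (k+1) → Fin n,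
          ((-1:ℝ) ^ ((c:ℕ)+1) * gkdelta (Fin.cons p I') J)
            * (A (J c) q * ∏ b : Fin k, A (J (c.succAbove b)) (I' b)) := by
        rw [Finset.sum_eq_single q]
        · simp
        · intro m _ hm
          simp [hm]
        · simp
    _ = ∑ I' : Fin k → Fin n, ∑ m : Fin n, ∑ J' : Fin k → Fin n,
          ((-1:ℝ) ^ ((c:ℕ)+1) * ((-1:ℝ) ^ (c:ℕ) * gkdelta (Fin.cons p I') (Fin.cons m J')))
            * (A m q * ∏ b : Fin k, A (J' b) (I' b)) := by
        refine Finset.sum_congr rfl fun I' _ => ?_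
        rw [sum_insertNth c]
        refine Finset.sum_congr rfl fun m _ => Finset.sum_congr rfl fun J' _ => ?_
        have hgk : gkdelta (Fin.cons p I') (c.insertNth m J')
            = (-1:ℝ) ^ (c:ℕ) * gkdelta (Fin.cons p I') (Fin.cons m J') := by
          rw [insertNth_eq_cons_comp_cycleRange, gkdelta_comp_right, Fin.sign_cycleRange]
          norm_num
        rw [hgk]
        simp [Fin.insertNth_apply_same, Fin.insertNth_apply_succAbove]
    _ = -∑ m : Fin n, (∑ I' : Fin k → Fin n, ∑ J' : Fin k → Fin n,
          gkdelta (Fin.cons p I') (Fin.cons m J') * ∏ b : Fin k, A (J' b) (I' b)) * A m q := by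
        rw [Finset.sum_comm, ← Finset.sum_neg_distrib]
        refine Finset.sum_congr rfl fun m _ => ?_
        rw [Finset.sum_mul, ← Finset.sum_neg_distrib]
        refine Finset.sum_congr rfl fun I' _ => ?_
        rw [Finset.sum_mul, ← Finset.sum_neg_distrib]
        refine Finset.sum_congr rfl fun J' _ => ?_
        have hsgn : (-1:ℝ) ^ ((c:ℕ)+1) * (-1:ℝ) ^ (c:ℕ) = -1 := by
          rw [← pow_add]
          exact Odd.neg_one_pow ⟨(c:ℕ), by ring⟩
        calc ((-1:ℝ) ^ ((c:ℕ)+1) * ((-1:ℝ) ^ (c:ℕ) * gkdelta (Fin.cons p I') (Fin.cons m J')))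
              * (A m q * ∏ b : Fin k, A (J' b) (I' b))
            = ((-1:ℝ) ^ ((c:ℕ)+1) * (-1:ℝ) ^ (c:ℕ)) *
                (gkdelta (Fin.cons p I') (Fin.cons m J') *
                  (∏ b : Fin k, A (J' b) (I' b)) * A m q) := by ring
          _ = -(gkdelta (Fin.cons p I') (Fin.cons m J') *
                  (∏ b : Fin k, A (J' b) (I' b)) * A m q) := by rw [hsgn]; ring

lemma TD_succ (n k : ℕ) (A : Fin n → Fin n → ℝ) (p q : Fin n) :
    TD n (k+1) A p q
      = sigmaDelta n (k+1) A * (if p = q then 1 else 0)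
        - ∑ m : Fin n, TD n k A p m * A m q := by
  classical
  have hfac : (Nat.factorial k : ℝ) ≠ 0 := Nat.cast_ne_zero.mpr (Nat.factorial_ne_zero k)
  have hfac1 : (Nat.factorial (k+1) : ℝ) ≠ 0 :=
    Nat.cast_ne_zero.mpr (Nat.factorial_ne_zero (k+1))
  have hS : ∀ m : Fin n, (∑ I' : Fin k → Fin n, ∑ J' : Fin k → Fin n,
      gkdelta (Fin.cons p I') (Fin.cons m J') * ∏ b : Fin k, A (J' b) (I' b))
      = (Nat.factorial k : ℝ) * TD n k A p m := by
    intro m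
    rw [TD]
    field_simp
  have hσ : (∑ I : Fin (k+1) → Fin n, ∑ J : Fin (k+1) → Fin n,
      gkdelta I J * ∏ a : Fin (k+1), A (J a) (I a))
      = (Nat.factorial (k+1) : ℝ) * sigmaDelta n (k+1) A := by
    calc (∑ I : Fin (k+1) → Fin n, ∑ J : Fin (k+1) → Fin n,
          gkdelta I J * ∏ a : Fin (k+1), A (J a) (I a))
        = ∑ J : Fin (k+1) → Fin n, ∑ I : Fin (k+1) → Fin n,
            gkdelta I J * ∏ a : Fin (k+1), A (J a) (I a) := Finset.sum_comm
      _ = ∑ I : Fin (k+1) → Fin n, ∑ J : Fin (k+1) → Fin n,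
            gkdelta I J * ∏ a : Fin (k+1), A (I a) (J a) := by
          refine Finset.sum_congr rfl fun I _ => Finset.sum_congr rfl fun J _ => ?_
          rw [gkdelta_symm]
      _ = (Nat.factorial (k+1) : ℝ) * sigmaDelta n (k+1) A := by
          rw [sigmaDelta]
          field_simp
  have hT : TD n (k+1) A p q = (1 / (Nat.factorial (k+1) : ℝ)) *
      ∑ I : Fin (k+1) → Fin n, ∑ J : Fin (k+1) → Fin n,
        gkdelta (Fin.cons p I) (Fin.cons q J) * ∏ a : Fin (k+1), A (J a) (I a) := rfl
  have hexp : (∑ I : Fin (k+1) → Fin n, ∑ J : Fin (k+1) → Fin n,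
      gkdelta (Fin.cons p I) (Fin.cons q J) * ∏ a : Fin (k+1), A (J a) (I a))
      = (if p = q then (1:ℝ) else 0) * ((Nat.factorial (k+1) : ℝ) * sigmaDelta n (k+1) A)
        + ((k:ℝ)+1) * (-∑ m : Fin n,
            ((Nat.factorial k : ℝ) * TD n k A p m) * A m q) := by
    calc (∑ I : Fin (k+1) → Fin n, ∑ J : Fin (k+1) → Fin n,
          gkdelta (Fin.cons p I) (Fin.cons q J) * ∏ a : Fin (k+1), A (J a) (I a))
        = ∑ I : Fin (k+1) → Fin n, ∑ J : Fin (k+1) → Fin n,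
            ((if p = q then (1:ℝ) else 0) * (gkdelta I J * ∏ a : Fin (k+1), A (J a) (I a))
              + ∑ c : Fin (k+1),
                (((-1:ℝ) ^ ((c:ℕ)+1) * (if I c = q then (1:ℝ) else 0) *
                  gkdelta (Fin.cons p (fun b => I (c.succAbove b))) J)
                    * ∏ a : Fin (k+1), A (J a) (I a))) := by
          refine Finset.sum_congr rfl fun I _ => Finset.sum_congr rfl fun J _ => ?_
          rw [gkdelta_cons_expand, add_mul, Finset.sum_mul, mul_assoc]
      _ = (∑ I : Fin (k+1) → Fin n, ∑ J : Fin (k+1) → Fin n,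
            (if p = q then (1:ℝ) else 0) * (gkdelta I J * ∏ a : Fin (k+1), A (J a) (I a)))
          + ∑ I : Fin (k+1) → Fin n, ∑ J : Fin (k+1) → Fin n, ∑ c : Fin (k+1),
              (((-1:ℝ) ^ ((c:ℕ)+1) * (if I c = q then (1:ℝ) else 0) *
                gkdelta (Fin.cons p (fun b => I (c.succAbove b))) J)
                  * ∏ a : Fin (k+1), A (J a) (I a)) := by
          simp only [Finset.sum_add_distrib]
      _ = (if p = q then (1:ℝ) else 0) * ((Nat.factorial (k+1) : ℝ) * sigmaDelta n (k+1) A)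
          + ∑ c : Fin (k+1), ∑ I : Fin (k+1) → Fin n, ∑ J : Fin (k+1) → Fin n,
              (((-1:ℝ) ^ ((c:ℕ)+1) * (if I c = q then (1:ℝ) else 0) *
                gkdelta (Fin.cons p (fun b => I (c.succAbove b))) J)
                  * ∏ a : Fin (k+1), A (J a) (I a)) := by
          congr 1
          · have h1 : ∀ I : Fin (k+1) → Fin n,
                (∑ J : Fin (k+1) → Fin n,
                  (if p = q then (1:ℝ) else 0) * (gkdelta I J * ∏ a : Fin (k+1), A (J a) (I a)))
                = (if p = q then (1:ℝ) else 0) *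
                    ∑ J : Fin (k+1) → Fin n, gkdelta I J * ∏ a : Fin (k+1), A (J a) (I a) :=
              fun I => by rw [← Finset.mul_sum]
            rw [Finset.sum_congr rfl (fun I _ => h1 I), ← Finset.mul_sum, hσ]
          · have h2 : ∀ I : Fin (k+1) → Fin n,
                (∑ J : Fin (k+1) → Fin n, ∑ c : Fin (k+1),
                  (((-1:ℝ) ^ ((c:ℕ)+1) * (if I c = q then (1:ℝ) else 0) *
                    gkdelta (Fin.cons p (fun b => I (c.succAbove b))) J)
                      * ∏ a : Fin (k+1), A (J a) (I a)))
                = ∑ c : Fin (k+1), ∑ J : Fin (k+1) → Fin n,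
                  (((-1:ℝ) ^ ((c:ℕ)+1) * (if I c = q then (1:ℝ) else 0) *
                    gkdelta (Fin.cons p (fun b => I (c.succAbove b))) J)
                      * ∏ a : Fin (k+1), A (J a) (I a)) := fun I => Finset.sum_comm
            rw [Finset.sum_congr rfl (fun I _ => h2 I)]
            exact Finset.sum_comm
      _ = (if p = q then (1:ℝ) else 0) * ((Nat.factorial (k+1) : ℝ) * sigmaDelta n (k+1) A)
          + ((k:ℝ)+1) * (-∑ m : Fin n,
              ((Nat.factorial k : ℝ) * TD n k A p m) * A m q) := by
          congr 1
          have hc : ∀ c : Fin (k+1),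
              (∑ I : Fin (k+1) → Fin n, ∑ J : Fin (k+1) → Fin n,
                (((-1:ℝ) ^ ((c:ℕ)+1) * (if I c = q then (1:ℝ) else 0) *
                  gkdelta (Fin.cons p (fun b => I (c.succAbove b))) J)
                    * ∏ a : Fin (k+1), A (J a) (I a)))
              = -∑ m : Fin n, ((Nat.factorial k : ℝ) * TD n k A p m) * A m q := by
            intro c
            rw [cofactor_term n k A p q c]
            congr 1
            refine Finset.sum_congr rfl fun m _ => ?_
            rw [hS m]
          rw [Finset.sum_congr rfl (fun c _ => hc c), Finset.sum_const, Finset.card_univ,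
            Fintype.card_fin, nsmul_eq_mul]
          push_cast
          ring
  rw [hT, hexp]
  have hfs : (Nat.factorial (k+1) : ℝ) = ((k:ℝ)+1) * (Nat.factorial k : ℝ) := by
    rw [Nat.factorial_succ]
    push_cast
    ring
  have hsum : ∑ m : Fin n, ((Nat.factorial k : ℝ) * TD n k A p m) * A m q
      = (Nat.factorial k : ℝ) * ∑ m : Fin n, TD n k A p m * A m q := by
    rw [Finset.mul_sum]
    exact Finset.sum_congr rfl fun m _ => by ring
  rw [hsum, hfs]
  by_cases hpq : p = q
  · simp only [hpq, if_true]
    field_simp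
    ring
  · simp only [hpq, if_false]
    field_simp
    ring

lemma newtonT_eq_TD (n : ℕ) : ∀ (k : ℕ) (A : Fin n → Fin n → ℝ) (p q : Fin n),
    newtonT n k A p q = TD n k A p q
  | 0, A, p, q => by rw [newtonT, TD_zero]
  | (k+1), A, p, q => by
      rw [show newtonT n (k+1) A p q = sigmaDelta n (k+1) A * (if p = q then (1:ℝ) else 0)
          - ∑ m : Fin n, newtonT n k A p m * A m q from rfl, TD_succ]
      congr 1
      exact Finset.sum_congr rfl fun m _ => by rw [newtonT_eq_TD n k]

noncomputable def evCLM (n : ℕ) (r s : Fin n) : (Fin n → Fin n → ℝ) →L[ℝ] ℝ :=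
  (ContinuousLinearMap.proj s : (Fin n → ℝ) →L[ℝ] ℝ).comp
    (ContinuousLinearMap.proj r : (Fin n → Fin n → ℝ) →L[ℝ] (Fin n → ℝ))

lemma fderiv_TD (n k : ℕ) (L : Fin n → Fin n → ℝ) (p q : Fin n) (v : Fin n → Fin n → ℝ) :
    fderiv ℝ (fun A => TD n k A p q) L v
      = (1 / (Nat.factorial k : ℝ)) *
        ∑ I : Fin k → Fin n, ∑ J : Fin k → Fin n,
          gkdelta (Fin.cons p I) (Fin.cons q J) *
            ∑ a : Fin k, (∏ b ∈ Finset.univ.erase a, L (J b) (I b)) * v (J a) (I a) := by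
  classical
  have hev : ∀ r s : Fin n,
      HasFDerivAt (fun A : Fin n → Fin n → ℝ => A r s) (evCLM n r s) L :=
    fun r s => (evCLM n r s).hasFDerivAt
  have hprod : ∀ I J : Fin k → Fin n,
      HasFDerivAt (fun A : Fin n → Fin n → ℝ => ∏ a : Fin k, A (J a) (I a))
        (∑ a : Fin k, (∏ b ∈ Finset.univ.erase a, L (J b) (I b)) • evCLM n (J a) (I a)) L :=
    fun I J => HasFDerivAt.finset_prod (fun a _ => hev (J a) (I a))
  have hsum : HasFDerivAt
      (fun A : Fin n → Fin n → ℝ => ∑ I : Fin k → Fin n, ∑ J : Fin k → Fin n,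
        gkdelta (Fin.cons p I) (Fin.cons q J) * ∏ a : Fin k, A (J a) (I a))
      (∑ I : Fin k → Fin n, ∑ J : Fin k → Fin n,
        gkdelta (Fin.cons p I) (Fin.cons q J) •
          ∑ a : Fin k, (∏ b ∈ Finset.univ.erase a, L (J b) (I b)) • evCLM n (J a) (I a)) L :=
    HasFDerivAt.fun_sum fun I _ => HasFDerivAt.fun_sum fun J _ => (hprod I J).const_mul _
  have hTD : HasFDerivAt (fun A => TD n k A p q)
      ((1 / (Nat.factorial k : ℝ)) •
        ∑ I : Fin k → Fin n, ∑ J : Fin k → Fin n,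
          gkdelta (Fin.cons p I) (Fin.cons q J) •
            ∑ a : Fin k, (∏ b ∈ Finset.univ.erase a, L (J b) (I b)) • evCLM n (J a) (I a)) L :=
    hsum.const_mul _
  rw [hTD.fderiv]
  simp only [ContinuousLinearMap.smul_apply, ContinuousLinearMap.sum_apply, smul_eq_mul,
    evCLM, ContinuousLinearMap.comp_apply, ContinuousLinearMap.proj_apply]


/-- Divergence-free property of the Newton tensor: if `L` is the (symmetric) second
fundamental form of a hypersurface of `ℝ^{n+1}` and `DL m i j = ∇ₘ L_{ij}` is its
covariant derivative, which by the Codazzi equation is fully symmetric in `m, i, j`,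
then `Σᵢ ∇ᵢ ([Tₖ]_{ij}(L)) = 0` for each `j`, where `∇ᵢ` acts on the polynomial
`Tₖ` in `L` via the chain rule with direction `∇ᵢL = DL i`. -/
theorem newton_tensor_div_free (n k : ℕ) (L : Fin n → Fin n → ℝ)
    (DL : Fin n → Fin n → Fin n → ℝ)
    (hLsym : ∀ i j, L i j = L j i)
    (hDLsym : ∀ m i j, DL m i j = DL m j i)
    (hCodazzi : ∀ m i j, DL m i j = DL j i m)
    (j : Fin n) :
    ∑ i : Fin n, fderiv ℝ (fun A => newtonT n k A i j) L (DL i) = 0 := by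
  classical
  have h1 : ∀ i : Fin n,
      fderiv ℝ (fun A => newtonT n k A i j) L (DL i)
        = fderiv ℝ (fun A => TD n k A i j) L (DL i) := by
    intro i
    have hfun : (fun A => newtonT n k A i j) = (fun A => TD n k A i j) :=
      funext fun A => newtonT_eq_TD n k A i j
    rw [hfun]
  rw [Finset.sum_congr rfl fun i _ => (h1 i).trans (fderiv_TD n k L i j (DL i))]
  rw [← Finset.mul_sum]
  apply mul_eq_zero_of_right
  -- key vanishing for fixed a and J
  have key : ∀ (a : Fin k) (J : Fin k → Fin n),
      (∑ x : Fin n × (Fin k → Fin n),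
        gkdelta (Fin.cons x.1 x.2) (Fin.cons j J) *
          ((∏ b ∈ Finset.univ.erase a, L (J b) (x.2 b)) * DL x.1 (J a) (x.2 a))) = 0 := by
    intro a J
    set f : Fin n × (Fin k → Fin n) → ℝ := fun x =>
      gkdelta (Fin.cons x.1 x.2) (Fin.cons j J) *
        ((∏ b ∈ Finset.univ.erase a, L (J b) (x.2 b)) * DL x.1 (J a) (x.2 a)) with hf
    have hφ : Function.Involutive
        (fun x : Fin n × (Fin k → Fin n) => (x.2 a, Function.update x.2 a x.1)) := by
      rintro ⟨i, I⟩
      simp [Function.update_idem, Function.update_self, Function.update_eq_self]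
    have hneg : ∀ x, f (hφ.toPerm _ x) = - f x := by
      rintro ⟨i, I⟩
      have hx : hφ.toPerm _ (i, I) = (I a, Function.update I a i) := rfl
      rw [hx, hf]
      simp only
      have hg : gkdelta (Fin.cons (I a) (Function.update I a i)) (Fin.cons j J)
          = - gkdelta (Fin.cons i I) (Fin.cons j J) := by
        rw [cons_update_eq_comp_swap, gkdelta_comp_left,
          Equiv.Perm.sign_swap (Ne.symm (Fin.succ_ne_zero a))]
        norm_num
      have hP : (∏ b ∈ Finset.univ.erase a, L (J b) (Function.update I a i b))
          = ∏ b ∈ Finset.univ.erase a, L (J b) (I b) := by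
        refine Finset.prod_congr rfl fun b hb => ?_
        rw [Function.update_of_ne (Finset.ne_of_mem_erase hb)]
      have hD : DL (I a) (J a) (Function.update I a i a) = DL i (J a) (I a) := by
        rw [Function.update_self]
        exact hCodazzi (I a) (J a) i
      rw [hg, hP, hD]
      ring
    have hS : (∑ x : Fin n × (Fin k → Fin n), f x)
        = - ∑ x : Fin n × (Fin k → Fin n), f x := by
      conv_lhs => rw [← Equiv.sum_comp (hφ.toPerm _) f]
      rw [← Finset.sum_neg_distrib]
      exact Finset.sum_congr rfl fun x _ => hneg x
    linarith
  -- rearrange the big sum and apply `key`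
  calc (∑ i : Fin n, ∑ I : Fin k → Fin n, ∑ J : Fin k → Fin n,
        gkdelta (Fin.cons i I) (Fin.cons j J) *
          ∑ a : Fin k, (∏ b ∈ Finset.univ.erase a, L (J b) (I b)) * DL i (J a) (I a))
      = ∑ i : Fin n, ∑ I : Fin k → Fin n, ∑ J : Fin k → Fin n, ∑ a : Fin k,
          gkdelta (Fin.cons i I) (Fin.cons j J) *
            ((∏ b ∈ Finset.univ.erase a, L (J b) (I b)) * DL i (J a) (I a)) := by
        refine Finset.sum_congr rfl fun i _ => Finset.sum_congr rfl fun I _ =>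
          Finset.sum_congr rfl fun J _ => ?_
        rw [Finset.mul_sum]
    _ = ∑ x : Fin n × (Fin k → Fin n), ∑ J : Fin k → Fin n, ∑ a : Fin k,
          gkdelta (Fin.cons x.1 x.2) (Fin.cons j J) *
            ((∏ b ∈ Finset.univ.erase a, L (J b) (x.2 b)) * DL x.1 (J a) (x.2 a)) :=
        (Fintype.sum_prod_type' _).symm
    _ = ∑ J : Fin k → Fin n, ∑ a : Fin k, ∑ x : Fin n × (Fin k → Fin n),
          gkdelta (Fin.cons x.1 x.2) (Fin.cons j J) *
            ((∏ b ∈ Finset.univ.erase a, L (J b) (x.2 b)) * DL x.1 (J a) (x.2 a)) := by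
        rw [Finset.sum_comm]
        exact Finset.sum_congr rfl fun J _ => Finset.sum_comm
    _ = 0 := by
        refine Finset.sum_eq_zero fun J _ => Finset.sum_eq_zero fun a _ => ?_
        exact key a J
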